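/- arXiv:2211.03704 — 3 statements merged into one kernel-verified Lean document; each statement's English description precedes it below -/
import Mathlib

section
/- Every (p+1)-centered coloring of a graph G is a low tree-depth decomposition with parameter p: any subset I of at most p color classes induces a subgraph with tree-depth at most |I|. -/
/-- A rooted forest on vertex type `V`, given by a parent function and a depth
function (depth 0 = roots). -/
structure RootedForest (V : Type*) where
  parent : V → V
  depth : V → ℕ
  root_iff : ∀ v, parent v = v ↔ depth v = 0
  depth_parent : ∀ v, depth v ≠ 0 → depth (parent v) + 1 = depth v

namespace RootedForest

variable {V : Type*}

/-- The forest has height at most `h` (counted in vertices on root-to-leaf paths). -/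
def HeightLE (F : RootedForest V) (h : ℕ) : Prop := ∀ v, F.depth v + 1 ≤ h

/-- `y` is an ancestor of `x` (possibly `y = x`). -/
def Ancestor (F : RootedForest V) (y x : V) : Prop := ∃ j, F.parent^[j] x = y

/-- Adjacency in the closure of the forest: distinct comparable vertices. -/
def ClosureAdj (F : RootedForest V) (x y : V) : Prop :=
  x ≠ y ∧ (F.Ancestor x y ∨ F.Ancestor y x)

end RootedForest

/-- The graph `G` has tree-depth at most `h`: it is a subgraph of the closure of a
rooted forest of height at most `h`. -/
def TreedepthLE {V : Type*} (G : SimpleGraph V) (h : ℕ) : Prop :=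
  ∃ F : RootedForest V, F.HeightLE h ∧ ∀ x y, G.Adj x y → F.ClosureAdj x y

/-- The tree-depth of a graph. -/
noncomputable def treedepth {V : Type*} (G : SimpleGraph V) : ℕ :=
  sInf {h | TreedepthLE G h}

/-- `γ` is a `p`-centered coloring of `G`: every connected subgraph either has a
color appearing exactly once or receives at least `p` colors. -/
def IsPCentered {V C : Type*} (G : SimpleGraph V) (γ : V → C) (p : ℕ) : Prop :=
  ∀ H : G.Subgraph, H.Connected →
    (∃ c, {v ∈ H.verts | γ v = c}.ncard = 1) ∨ p ≤ (γ '' H.verts).ncard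

/-- `γ` is a centered coloring of `G`: every connected subgraph has a color
appearing exactly once. -/
def IsCentered {V C : Type*} (G : SimpleGraph V) (γ : V → C) : Prop :=
  ∀ H : G.Subgraph, H.Connected → ∃ c, {v ∈ H.verts | γ v = c}.ncard = 1

/-!
On the vertices with colours in `I`, a `(p+1)`-centered coloring is centered, because a connected
subgraph there sees at most `p` colours. A centered coloring gives a forest whose closure contains
the graph: in each component the vertex of unique colour becomes the root, and one recurses on the
graph with these roots deleted. Each component of the remainder lacks the colour of the root
above it, so the depth of a vertex stays below the number of colours of its component.
-/

open SimpleGraph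

namespace RootedForest

variable {V : Type*} (F : RootedForest V)

def root (v : V) : V := F.parent^[F.depth v] v

lemma depth_iterate_parent_add {j : ℕ} {v : V} (h : j ≤ F.depth v) :
    F.depth (F.parent^[j] v) + j = F.depth v := by
  induction j generalizing v with
  | zero => rfl
  | succ j ih =>
    have hparent := F.depth_parent v (by omega)
    have := ih (v := F.parent v) (by omega)
    rw [Function.iterate_succ_apply]
    omega

lemma depth_root (v : V) : F.depth (F.root v) = 0 := by
  have := F.depth_iterate_parent_add (le_refl (F.depth v))
  unfold root
  omega

lemma iterate_parent_of_depth_le {j : ℕ} {v : V} (h : F.depth v ≤ j) :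
    F.parent^[j] v = F.root v := by
  obtain ⟨k, rfl⟩ := Nat.exists_eq_add_of_le h
  rw [Nat.add_comm, Function.iterate_add_apply]
  exact Function.iterate_fixed ((F.root_iff _).2 (F.depth_root v)) k

lemma Ancestor.exists_le_depth {F : RootedForest V} {x y : V} (h : F.Ancestor x y) :
    ∃ j ≤ F.depth y, F.parent^[j] y = x := by
  obtain ⟨j, rfl⟩ := h
  rcases le_total j (F.depth y) with hj | hj
  · exact ⟨j, hj, rfl⟩
  · exact ⟨F.depth y, le_rfl, (F.iterate_parent_of_depth_le hj).symm⟩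

lemma reachable_iterate_parent {G : SimpleGraph V} (h : ∀ v, G.Reachable v (F.parent v))
    (j : ℕ) (v : V) : G.Reachable v (F.parent^[j] v) := by
  induction j generalizing v with
  | zero => rfl
  | succ j ih => exact (h v).trans (ih _)

variable {A : Set V}

open Classical in
noncomputable def extend (F : RootedForest A) (r : V → V) (hr : ∀ v ∈ A, r v ∉ A) :
    RootedForest V where
  parent v := if h : v ∈ A then (if F.depth ⟨v, h⟩ = 0 then r v else F.parent ⟨v, h⟩) else v
  depth v := if h : v ∈ A then F.depth ⟨v, h⟩ + 1 else 0
  root_iff v := by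
    by_cases h : v ∈ A
    · simp only [dif_pos h, Nat.add_eq_zero_iff, one_ne_zero, and_false, iff_false]
      split_ifs with h0
      · exact fun hrv => hr v h (by rwa [hrv])
      · exact fun hp => h0 ((F.root_iff _).1 (Subtype.ext hp))
    · simp [h]
  depth_parent v hv := by
    have h : v ∈ A := by_contra fun h => hv (dif_neg h)
    by_cases h0 : F.depth ⟨v, h⟩ = 0
    · simp [h, h0, hr v h]
    · simp [h, h0, F.depth_parent _ h0]

variable (F : RootedForest A) (r : V → V) (hr : ∀ v ∈ A, r v ∉ A)

lemma extend_parent_of_notMem {v : V} (h : v ∉ A) : (F.extend r hr).parent v = v :=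
  dif_neg h

lemma extend_parent_of_depth_eq_zero {u : A} (h : F.depth u = 0) :
    (F.extend r hr).parent u = r u := by
  simp [extend, h]

lemma extend_parent_of_depth_ne_zero {u : A} (h : F.depth u ≠ 0) :
    (F.extend r hr).parent u = F.parent u := by
  simp [extend, h]

lemma extend_depth_coe (u : A) : (F.extend r hr).depth u = F.depth u + 1 := by
  simp [extend]

lemma extend_depth_of_notMem {v : V} (h : v ∉ A) : (F.extend r hr).depth v = 0 :=
  dif_neg h

lemma extend_iterate_parent {j : ℕ} {u : A} (h : j ≤ F.depth u) :
    (F.extend r hr).parent^[j] u = F.parent^[j] u := by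
  induction j with
  | zero => rfl
  | succ j ih =>
    have := F.depth_iterate_parent_add (v := u) (by omega : j ≤ F.depth u)
    rw [Function.iterate_succ_apply', Function.iterate_succ_apply', ih (by omega),
      extend_parent_of_depth_ne_zero _ _ _ (by omega)]

lemma Ancestor.extend {F : RootedForest A} {x y : A} (h : F.Ancestor x y) :
    (F.extend r hr).Ancestor x y := by
  obtain ⟨j, hj, rfl⟩ := h.exists_le_depth
  exact ⟨j, F.extend_iterate_parent r hr hj⟩

lemma ancestor_extend_root (u : A) : (F.extend r hr).Ancestor (r (F.root u)) u := by
  refine ⟨F.depth u + 1, ?_⟩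
  rw [Function.iterate_succ_apply', F.extend_iterate_parent r hr le_rfl]
  exact extend_parent_of_depth_eq_zero _ _ _ (F.depth_root u)

end RootedForest

lemma TreedepthLE.mono {V : Type*} {G : SimpleGraph V} {a b : ℕ} (h : TreedepthLE G a)
    (hab : a ≤ b) : TreedepthLE G b :=
  let ⟨F, hF, hadj⟩ := h
  ⟨F, fun v => (hF v).trans hab, hadj⟩

theorem SimpleGraph.Subgraph.Connected.map_hom {V W : Type*} {G : SimpleGraph V}
    {H : SimpleGraph W} {K : H.Subgraph} (hK : K.Connected) (f : H →g G) :
    (K.map f).Connected := by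
  rw [Subgraph.connected_iff'] at hK ⊢
  refine hK.map ⟨fun u : K.verts => ⟨f u, u.1, u.2, rfl⟩, fun hadj => ⟨_, _, hadj, rfl, rfl⟩⟩ ?_
  rintro ⟨_, u, hu, rfl⟩
  exact ⟨⟨u, hu⟩, rfl⟩

section Coloring

variable {V C : Type*} {G : SimpleGraph V} {γ : V → C}

lemma ncard_sep_map_induce {s : Set V} (K : (G.induce s).Subgraph) (c : C) :
    {v ∈ (K.map (Embedding.induce s).toHom).verts | γ v = c}.ncard =
      {v ∈ K.verts | γ v = c}.ncard := by
  rw [← Set.ncard_image_of_injective _ Subtype.val_injective]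
  congr 1
  ext v
  simp only [Subgraph.map_verts, Set.mem_ofPred_eq, Set.mem_image]
  aesop

lemma IsCentered.induce (hc : IsCentered G γ) (s : Set V) :
    IsCentered (G.induce s) (fun v => γ v) := fun K hK => by
  obtain ⟨c, hc⟩ := hc _ (hK.map_hom (Embedding.induce s).toHom)
  exact ⟨c, by rwa [ncard_sep_map_induce] at hc⟩

lemma IsPCentered.isCentered_induce_preimage {p : ℕ} (hγ : IsPCentered G γ (p + 1))
    {I : Finset C} (hI : I.card ≤ p) : IsCentered (G.induce (γ ⁻¹' I)) (fun v => γ v) :=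
  fun K hK => by
  rcases hγ _ (hK.map_hom (Embedding.induce _).toHom) with ⟨c, hc⟩ | hbig
  · exact ⟨c, by rwa [ncard_sep_map_induce] at hc⟩
  · have hsub : γ '' (K.map (Embedding.induce _).toHom).verts ⊆ I := by
      rintro _ ⟨_, ⟨u, -, rfl⟩, rfl⟩
      exact u.2
    have := Set.ncard_le_ncard hsub I.finite_toSet
    rw [Set.ncard_coe_finset] at this
    omega

structure IsCenterMap (G : SimpleGraph V) (γ : V → C) (r : V → V) : Prop where
  reachable : ∀ v, G.Reachable v (r v)
  eq_of_reachable : ∀ {v w}, G.Reachable v w → r w = r v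
  eq_of_color_eq : ∀ {v w}, G.Reachable v w → γ w = γ (r v) → w = r v

lemma IsCentered.exists_isCenterMap (hc : IsCentered G γ) : ∃ r, IsCenterMap G γ r := by
  have hcenter (c : G.ConnectedComponent) : ∃ x ∈ c, ∀ w ∈ c, γ w = γ x → w = x := by
    obtain ⟨k, hk⟩ := hc _ (connected_induce_iff.1 c.connected_toSimpleGraph)
    obtain ⟨x, hx⟩ := Set.ncard_eq_one.1 hk
    have hx' : x ∈ c ∧ γ x = k := (Set.ext_iff.1 hx x).2 rfl
    refine ⟨x, hx'.1, fun w hw hγ => ?_⟩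
    exact (Set.ext_iff.1 hx w).1 ⟨hw, hγ.trans hx'.2⟩
  choose center hmem huniq using hcenter
  refine ⟨fun v => center (G.connectedComponentMk v), fun v => ?_, fun hvw => ?_,
    fun hvw hγ => ?_⟩
  · exact ConnectedComponent.exact (hmem _).symm
  · rw [ConnectedComponent.sound hvw]
  · exact huniq _ _ (ConnectedComponent.sound hvw).symm hγ

def componentColors (G : SimpleGraph V) (γ : V → C) (v : V) : Set C :=
  γ '' {w | G.Reachable v w}

structure IsEliminationForest (G : SimpleGraph V) (γ : V → C) (F : RootedForest V) : Prop where
  reachable_parent : ∀ v, G.Reachable v (F.parent v)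
  depth_lt : ∀ v, F.depth v < (componentColors G γ v).ncard
  closureAdj : ∀ x y, G.Adj x y → F.ClosureAdj x y

namespace IsCenterMap

variable {r : V → V}

lemma map_map (hr : IsCenterMap G γ r) (v : V) : r (r v) = r v :=
  hr.eq_of_reachable (hr.reachable v)

lemma map_notMem (hr : IsCenterMap G γ r) : ∀ v ∈ {v | r v ≠ v}, r v ∉ {v | r v ≠ v} :=
  fun v _ h => h (hr.map_map v)

lemma card_lt [Finite V] [Nonempty V] (hr : IsCenterMap G γ r) :
    Nat.card {v | r v ≠ v} < Nat.card V :=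
  Finite.card_subtype_lt (x := r (Classical.arbitrary V)) (by simpa using hr.map_map _)

lemma ncard_componentColors_induce_lt [Finite V] (hr : IsCenterMap G γ r) (u : {v | r v ≠ v}) :
    (componentColors (G.induce {v | r v ≠ v}) (fun v => γ v) u).ncard <
      (componentColors G γ u).ncard := by
  refine Set.ncard_lt_ncard ((Set.ssubset_iff_of_subset ?_).2
    ⟨γ (r u), ⟨r u, hr.reachable u, rfl⟩, ?_⟩) ((Set.toFinite _).image γ)
  · rintro _ ⟨w, hw, rfl⟩
    exact ⟨w, hw.map (Embedding.induce _).toHom, rfl⟩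
  · rintro ⟨w, hw, hγ⟩
    have hw' : G.Reachable u w := hw.map (Embedding.induce _).toHom
    exact w.2 ((hr.eq_of_reachable hw').trans (hr.eq_of_color_eq hw' hγ).symm)

variable {F : RootedForest {v | r v ≠ v}}

lemma ancestor_extend_of_adj (hr : IsCenterMap G γ r)
    (hF : IsEliminationForest (G.induce {v | r v ≠ v}) (fun v => γ v) F) {x y : V}
    (hxy : G.Adj x y) (hx : r x = x) : (F.extend r hr.map_notMem).Ancestor x y := by
  have hry : r y = x := (hr.eq_of_reachable hxy.reachable).trans hx
  let u : {v | r v ≠ v} := ⟨y, fun h => hxy.ne (hry.symm.trans h)⟩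
  have hroot : G.Reachable y (F.root u) :=
    (F.reachable_iterate_parent hF.reachable_parent _ u).map (Embedding.induce _).toHom
  have := F.ancestor_extend_root r hr.map_notMem u
  rwa [hr.eq_of_reachable hroot, hry] at this

lemma isEliminationForest_extend [Finite V] (hr : IsCenterMap G γ r)
    (hF : IsEliminationForest (G.induce {v | r v ≠ v}) (fun v => γ v) F) :
    IsEliminationForest G γ (F.extend r hr.map_notMem) where
  reachable_parent v := by
    by_cases hv : r v ≠ v
    · obtain ⟨u, rfl⟩ : ∃ u : {v | r v ≠ v}, ↑u = v := ⟨⟨v, hv⟩, rfl⟩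
      by_cases h0 : F.depth u = 0
      · rw [F.extend_parent_of_depth_eq_zero r _ h0]
        exact hr.reachable u
      · rw [F.extend_parent_of_depth_ne_zero r _ h0]
        exact (hF.reachable_parent u).map (Embedding.induce _).toHom
    · rw [F.extend_parent_of_notMem r _ hv]
  depth_lt v := by
    by_cases hv : r v ≠ v
    · obtain ⟨u, rfl⟩ : ∃ u : {v | r v ≠ v}, ↑u = v := ⟨⟨v, hv⟩, rfl⟩
      have := hr.ncard_componentColors_induce_lt u
      have := hF.depth_lt u
      rw [F.extend_depth_coe]
      omega
    · rw [F.extend_depth_of_notMem r _ hv]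
      exact (Set.ncard_pos ((Set.toFinite _).image γ)).2 ⟨γ v, v, Reachable.refl v, rfl⟩
  closureAdj x y hxy := by
    refine ⟨hxy.ne, ?_⟩
    by_cases hx : r x = x
    · exact .inl (hr.ancestor_extend_of_adj hF hxy hx)
    by_cases hy : r y = y
    · exact .inr (hr.ancestor_extend_of_adj hF hxy.symm hy)
    obtain ⟨-, h | h⟩ := hF.closureAdj ⟨x, hx⟩ ⟨y, hy⟩ hxy
    · exact .inl (h.extend r _)
    · exact .inr (h.extend r _)

end IsCenterMap

theorem IsCentered.exists_isEliminationForest [Finite V] (hc : IsCentered G γ) : ∃ F, IsEliminationForest G γ F := by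
  induction h : Nat.card V using Nat.strong_induction_on generalizing V with
  | _ n ih =>
  rcases isEmpty_or_nonempty V with hV | hV
  · exact ⟨⟨id, 0, isEmptyElim, isEmptyElim⟩, ⟨isEmptyElim, isEmptyElim, isEmptyElim⟩⟩
  obtain ⟨r, hr⟩ := hc.exists_isCenterMap
  obtain ⟨F, hF⟩ := ih _ (h ▸ hr.card_lt) (hc.induce _) rfl
  exact ⟨_, hr.isEliminationForest_extend hF⟩

theorem IsCentered.treedepthLE [Finite V] (hc : IsCentered G γ) :
    TreedepthLE G (Set.range γ).ncard := by
  obtain ⟨F, hF⟩ := hc.exists_isEliminationForest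
  refine ⟨F, fun v => (hF.depth_lt v).trans_le ?_, hF.closureAdj⟩
  exact Set.ncard_le_ncard (Set.image_subset_range _ _) (Set.finite_range γ)

end Coloring

theorem pCentered_low_treedepth_general {V C : Type*} [Fintype V]
    (G : SimpleGraph V) (γ : V → C) (p : ℕ) (hγ : IsPCentered G γ (p + 1))
    (I : Finset C) (hI : I.card ≤ p) :
    TreedepthLE (G.induce (γ ⁻¹' ↑I)) I.card := by
  refine (hγ.isCentered_induce_preimage hI).treedepthLE.mono ?_
  rw [← Set.ncard_coe_finset]
  exact Set.ncard_le_ncard (Set.range_subset_iff.2 fun v => v.2) I.finite_toSet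

/-- Every `(p+1)`-centered coloring is a low tree-depth decomposition with
parameter `p`: any set `I` of at most `p` colors induces a subgraph of
tree-depth at most `|I|`. -/
theorem pCentered_low_treedepth {V C : Type*} [Fintype V] [DecidableEq C]
    (G : SimpleGraph V) (γ : V → C) (p : ℕ) (hγ : IsPCentered G γ (p + 1))
    (I : Finset C) (hI : I.card ≤ p) :
    TreedepthLE (G.induce (γ ⁻¹' ↑I)) I.card :=
  pCentered_low_treedepth_general G γ p hγ I hI
end

section
/- If γ is a centered coloring of a graph G using h colors, then the tree-depth of G is at most h. -/
/-!
Every vertex set inducing a connected subgraph contains a center: a vertex whose color occurs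
nowhere else in the set. Starting from the component of `v`, repeatedly delete the center and
pass to the component of `v` in what remains. Each step loses the color of the deleted center,
so after fewer than `h` steps `v` is itself the center; call that step the depth of `v` and the
center one step earlier its parent. Two adjacent vertices stay in a common component until one
of them is deleted, so the one of smaller depth is a center in the chain of the other, i.e. one
of its ancestors.
-/

namespace SimpleGraph

variable {V : Type*} (G : SimpleGraph V)

def componentWithin (S : Set V) (v : V) : Set V :=
  (((⊤ : G.Subgraph).induce S).spanningCoe.connectedComponentMk v).supp

variable {G} {S : Set V} {v w : V}

lemma mem_componentWithin_iff :
    w ∈ G.componentWithin S v ↔ ((⊤ : G.Subgraph).induce S).spanningCoe.Reachable v w := by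
  rw [componentWithin, ConnectedComponent.mem_supp_iff, ConnectedComponent.eq, reachable_comm]

lemma mem_componentWithin_self : v ∈ G.componentWithin S v :=
  mem_componentWithin_iff.2 Reachable.rfl

lemma mem_componentWithin_of_adj (hv : v ∈ S) (hw : w ∈ S) (hvw : G.Adj v w) :
    w ∈ G.componentWithin S v :=
  mem_componentWithin_iff.2 (Adj.reachable ⟨hv, hw, hvw⟩)

lemma componentWithin_eq_of_mem (hw : w ∈ G.componentWithin S v) :
    G.componentWithin S w = G.componentWithin S v :=
  congrArg ConnectedComponent.supp (ConnectedComponent.eq.2 (mem_componentWithin_iff.1 hw).symm)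

lemma componentWithin_subset_insert : G.componentWithin S v ⊆ insert v S := by
  intro w hw
  induction (reachable_iff_reflTransGen _ _).1 (mem_componentWithin_iff.1 hw) with
  | refl => exact Set.mem_insert v S
  | tail _ hadj _ => exact Or.inr hadj.2.1

lemma componentWithin_subset (hv : v ∈ S) : G.componentWithin S v ⊆ S :=
  componentWithin_subset_insert.trans (Set.insert_subset hv le_rfl)

lemma connected_induce_componentWithin : (G.induce (G.componentWithin S v)).Connected :=
  ConnectedComponent.connected_toSimpleGraph _ |>.mono
    (comap_monotone _ (Subgraph.spanningCoe_le _))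

end SimpleGraph

namespace CenteredColoring

open SimpleGraph

variable {V C : Type*}

def IsCenter (γ : V → C) (K : Set V) (a : V) : Prop :=
  a ∈ K ∧ ∀ u ∈ K, γ u = γ a → u = a

lemma IsCenter.image_ssubset {γ : V → C} {K L : Set V} {a : V} (ha : IsCenter γ K a)
    (hL : L ⊆ K \ {a}) : γ '' L ⊂ γ '' K := by
  refine (Set.ssubset_iff_of_subset (Set.image_mono (hL.trans Set.sdiff_subset))).2
    ⟨γ a, ⟨a, ha.1, rfl⟩, ?_⟩
  rintro ⟨u, hu, hua⟩
  exact (hL hu).2 (ha.2 u (hL hu).1 hua)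

lemma exists_isCenter {G : SimpleGraph V} {γ : V → C} (hγ : IsCentered G γ) {K : Set V}
    (hK : (G.induce K).Connected) : ∃ a, IsCenter γ K a := by
  obtain ⟨c, hc⟩ := hγ _ (connected_induce_iff.1 hK)
  obtain ⟨a, ha⟩ := Set.ncard_eq_one.1 hc
  have hmem (u : V) : u ∈ K ∧ γ u = c ↔ u = a := Set.ext_iff.1 ha u
  obtain ⟨haK, hac⟩ := (hmem a).2 rfl
  exact ⟨a, haK, fun u hu hua => (hmem u).1 ⟨hu, hua.trans hac⟩⟩

variable [Nonempty V]

noncomputable def center (γ : V → C) (K : Set V) : V :=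
  Classical.epsilon (IsCenter γ K)

lemma isCenter_center {γ : V → C} {K : Set V} (h : ∃ a, IsCenter γ K a) :
    IsCenter γ K (center γ K) :=
  Classical.epsilon_spec h

variable (G : SimpleGraph V) (γ : V → C)

noncomputable def chain (v : V) : ℕ → Set V
  | 0 => G.componentWithin Set.univ v
  | i + 1 => G.componentWithin (chain v i \ {center γ (chain v i)}) v

noncomputable def depth (v : V) : ℕ :=
  sInf {i | center γ (chain G γ v i) = v}

noncomputable def parent (v : V) : V :=
  if depth G γ v = 0 then v else center γ (chain G γ v (depth G γ v - 1))

variable {G γ} {v w x y : V} {i j : ℕ}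

lemma mem_chain_self : v ∈ chain G γ v i := by
  cases i <;> exact mem_componentWithin_self

lemma chain_antitone : Antitone (chain G γ v) :=
  antitone_nat_of_succ_le fun _ =>
    componentWithin_subset_insert.trans (Set.insert_subset mem_chain_self Set.sdiff_subset)

lemma chain_succ_subset (hv : center γ (chain G γ v i) ≠ v) :
    chain G γ v (i + 1) ⊆ chain G γ v i \ {center γ (chain G γ v i)} :=
  componentWithin_subset ⟨mem_chain_self, hv.symm⟩

lemma chain_eq_of_mem (hw : w ∈ chain G γ v i) (hj : j ≤ i) :
    chain G γ w j = chain G γ v j := by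
  induction j with
  | zero => exact componentWithin_eq_of_mem (chain_antitone (Nat.zero_le i) hw)
  | succ j ih =>
    rw [chain, chain, ih (by omega)]
    exact componentWithin_eq_of_mem (chain_antitone hj hw)

lemma isCenter_center_chain (hγ : IsCentered G γ) :
    IsCenter γ (chain G γ v i) (center γ (chain G γ v i)) := by
  refine isCenter_center (exists_isCenter hγ ?_)
  cases i <;> exact connected_induce_componentWithin

lemma center_chain_ne_of_lt_depth (hj : j < depth G γ v) : center γ (chain G γ v j) ≠ v :=
  Nat.notMem_of_lt_sInf hj

lemma depth_eq (hi : center γ (chain G γ v i) = v)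
    (hlt : ∀ j < i, center γ (chain G γ v j) ≠ v) : depth G γ v = i :=
  le_antisymm (Nat.sInf_le hi) <| not_lt.1 fun h =>
    hlt _ h (Nat.sInf_mem (s := {i | center γ (chain G γ v i) = v}) ⟨i, hi⟩)

lemma add_ncard_image_chain_le [Finite C] (hγ : IsCentered G γ)
    (hi : ∀ j < i, center γ (chain G γ v j) ≠ v) :
    i + (γ '' chain G γ v i).ncard ≤ Nat.card C := by
  induction i with
  | zero => simpa using Set.ncard_le_card _
  | succ i ih =>
    have hlt : (γ '' chain G γ v (i + 1)).ncard < (γ '' chain G γ v i).ncard :=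
      Set.ncard_lt_ncard <|
        (isCenter_center_chain hγ).image_ssubset (chain_succ_subset (hi i i.lt_succ_self))
    have := ih fun j hj => hi j (by omega)
    omega

lemma ncard_image_chain_pos [Finite C] : 0 < (γ '' chain G γ v i).ncard :=
  (Set.ncard_pos (Set.toFinite _)).2 ⟨γ v, v, mem_chain_self, rfl⟩

lemma exists_center_chain_eq [Finite C] (hγ : IsCentered G γ) :
    ∃ i, center γ (chain G γ v i) = v := by
  by_contra! h
  have := add_ncard_image_chain_le (i := Nat.card C) hγ fun j _ => h j
  have := ncard_image_chain_pos (G := G) (γ := γ) (v := v) (i := Nat.card C)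
  omega

lemma center_chain_depth [Finite C] (hγ : IsCentered G γ) :
    center γ (chain G γ v (depth G γ v)) = v :=
  Nat.sInf_mem (exists_center_chain_eq hγ)

lemma depth_lt_card [Finite C] (hγ : IsCentered G γ) : depth G γ v < Nat.card C := by
  have := add_ncard_image_chain_le hγ fun j => center_chain_ne_of_lt_depth (v := v) (j := j)
  have := ncard_image_chain_pos (G := G) (γ := γ) (v := v) (i := depth G γ v)
  omega

lemma parent_of_depth_ne_zero (hv : depth G γ v ≠ 0) :
    parent G γ v = center γ (chain G γ v (depth G γ v - 1)) :=
  if_neg hv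

lemma parent_eq_self_iff : parent G γ v = v ↔ depth G γ v = 0 := by
  refine ⟨fun h => by_contra fun hv => ?_, fun hv => if_pos hv⟩
  exact center_chain_ne_of_lt_depth (by omega) ((parent_of_depth_ne_zero hv).symm.trans h)

lemma chain_parent (hγ : IsCentered G γ) (hv : depth G γ v ≠ 0) (hj : j ≤ depth G γ v - 1) :
    chain G γ (parent G γ v) j = chain G γ v j := by
  refine chain_eq_of_mem ?_ hj
  rw [parent_of_depth_ne_zero hv]
  exact (isCenter_center_chain hγ).1

lemma depth_parent (hγ : IsCentered G γ) (hv : depth G γ v ≠ 0) :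
    depth G γ (parent G γ v) = depth G γ v - 1 := by
  refine depth_eq ?_ fun j hj hcenter => ?_
  · rw [chain_parent hγ hv le_rfl, parent_of_depth_ne_zero hv]
  · rw [chain_parent hγ hv hj.le] at hcenter
    have hmem : parent G γ v ∈ chain G γ v (j + 1) :=
      chain_antitone (by omega) (chain_parent hγ hv le_rfl ▸ mem_chain_self)
    exact (chain_succ_subset (center_chain_ne_of_lt_depth (by omega)) hmem).2 hcenter.symm

lemma parent_iterate [Finite C] (hγ : IsCentered G γ) (m : ℕ) :
    ∀ v k, k + m = depth G γ v → (parent G γ)^[m] v = center γ (chain G γ v k) := by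
  induction m with
  | zero =>
    rintro v k rfl
    exact (center_chain_depth hγ).symm
  | succ m ih =>
    intro v k hk
    have hv : depth G γ v ≠ 0 := by omega
    rw [Function.iterate_succ_apply, ih _ k (by rw [depth_parent hγ hv]; omega),
      chain_parent hγ hv (by omega)]

lemma mem_chain_of_adj (hxy : G.Adj x y) (hx : i ≤ depth G γ x) (hy : i ≤ depth G γ y) :
    y ∈ chain G γ x i := by
  induction i with
  | zero => exact mem_componentWithin_of_adj trivial trivial hxy
  | succ i ih =>
    have hyi := ih (by omega) (by omega)
    have hy' := center_chain_ne_of_lt_depth (G := G) (γ := γ) (v := y) (j := i) (by omega)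
    rw [chain_eq_of_mem hyi le_rfl] at hy'
    exact mem_componentWithin_of_adj
      ⟨mem_chain_self, (center_chain_ne_of_lt_depth (by omega)).symm⟩ ⟨hyi, hy'.symm⟩ hxy

lemma parent_iterate_of_adj [Finite C] (hγ : IsCentered G γ) (hxy : G.Adj x y)
    (hle : depth G γ x ≤ depth G γ y) : (parent G γ)^[depth G γ y - depth G γ x] y = x := by
  rw [parent_iterate hγ _ y (depth G γ x) (by omega),
    chain_eq_of_mem (mem_chain_of_adj hxy le_rfl hle) le_rfl, center_chain_depth hγ]

noncomputable def forest (hγ : IsCentered G γ) : RootedForest V where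
  parent := parent G γ
  depth := depth G γ
  root_iff _ := parent_eq_self_iff
  depth_parent _ hv := by rw [depth_parent hγ hv]; omega

end CenteredColoring

open CenteredColoring in
theorem IsCentered.treedepthLE_s5 {V C : Type*} [Finite C] {G : SimpleGraph V} {γ : V → C}
    (hγ : IsCentered G γ) : TreedepthLE G (Nat.card C) := by
  cases isEmpty_or_nonempty V
  · exact ⟨⟨id, 0, isEmptyElim, isEmptyElim⟩, isEmptyElim, isEmptyElim⟩
  refine ⟨forest hγ, fun _ => depth_lt_card hγ, fun x y hxy => ⟨hxy.ne, ?_⟩⟩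
  rcases le_total (depth G γ x) (depth G γ y) with hle | hle
  · exact Or.inl ⟨_, parent_iterate_of_adj hγ hxy hle⟩
  · exact Or.inr ⟨_, parent_iterate_of_adj hγ hxy.symm hle⟩

theorem centered_treedepth_le_general {V : Type*} (G : SimpleGraph V)
    (h : ℕ) (γ : V → Fin h) (hγ : IsCentered G γ) :
    TreedepthLE G h := by
  simpa using hγ.treedepthLE_s5

/-- If `γ` is a centered coloring of `G` using `h` colors, then the tree-depth
of `G` is at most `h`. -/
theorem centered_treedepth_le {V : Type*} [Fintype V] (G : SimpleGraph V)
    (h : ℕ) (γ : V → Fin h) (hγ : IsCentered G γ) :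
    TreedepthLE G h :=
  centered_treedepth_le_general G h γ hγ
end

section
/- Let R be a finite ring with p elements and M an n×n matrix over R with set-rank at most r. Then there exists a labeling of [n] by unary predicates W_{d,ℓ} and V_{d,ℓ} (for d ∈ R \ {0}, ℓ ⊆ [r]) such that for every nonzero d and all i, j: M_{i,j} = d if and only if there exists ℓ ⊆ [r] with W_{d,ℓ}(i) and V_{d,ℓ}(j). -/
/-- The `d`-slice of `M`, viewed as a 0-1 matrix over `F₂`. -/
def matSlice2 {n : ℕ} {R : Type*} [DecidableEq R]
    (M : Matrix (Fin n) (Fin n) R) (d : R) : Matrix (Fin n) (Fin n) (ZMod 2) :=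
  Matrix.of fun i j => if M i j = d then 1 else 0

/-- The set-rank of `M`: the sum, over the nonzero elements `d` of `R`, of the
rank over `F₂` of the `d`-slice of `M`. -/
noncomputable def srank {n : ℕ} {R : Type*} [Fintype R] [DecidableEq R] [Zero R]
    (M : Matrix (Fin n) (Fin n) R) : ℕ :=
  ∑ d ∈ Finset.univ.erase (0 : R), (matSlice2 M d).rank

open Matrix in
lemma slice_label {n r : ℕ} (S : Matrix (Fin n) (Fin n) (ZMod 2))
    (hS : S.rank ≤ r) :
    ∃ (W V : Finset (Fin r) → Set (Fin n)),
      ∀ i j, S i j = 1 ↔ ∃ ℓ : Finset (Fin r), i ∈ W ℓ ∧ j ∈ V ℓ := by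
  classical
  set T := Sᵀ
  have hrange : ∀ i, S i ∈ LinearMap.range T.mulVecLin := by
    intro i
    refine ⟨Pi.single i 1, ?_⟩
    ext j
    simp [T, Matrix.mulVecLin_apply, Matrix.mulVec, dotProduct,
      Pi.single_apply, Matrix.transpose_apply]
  have hcard : Fintype.card (LinearMap.range T.mulVecLin) ≤ Fintype.card (Finset (Fin r)) := by
    rw [Module.card_eq_pow_finrank (K := ZMod 2)]
    have : Module.finrank (ZMod 2) (LinearMap.range T.mulVecLin) = T.rank := rfl
    rw [this, ZMod.card]
    have : T.rank ≤ r := by rw [Matrix.rank_transpose]; exact hS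
    calc (2:ℕ) ^ T.rank ≤ 2 ^ r := Nat.pow_le_pow_right (by norm_num) this
      _ = Fintype.card (Finset (Fin r)) := by simp
  obtain ⟨e⟩ := Function.Embedding.nonempty_of_card_le hcard
  let f : Fin n → Finset (Fin r) := fun i => e ⟨S i, hrange i⟩
  have hf : ∀ i i', f i = f i' → S i = S i' := by
    intro i i' h
    have := e.injective h
    exact congrArg Subtype.val this
  refine ⟨fun ℓ => {i | f i = ℓ}, fun ℓ => {j | ∃ i0, f i0 = ℓ ∧ S i0 j = 1}, ?_⟩
  intro i j
  constructor
  · intro h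
    exact ⟨f i, rfl, i, rfl, h⟩
  · rintro ⟨ℓ, hi, i0, hi0, h1⟩
    have : S i0 = S i := hf i0 i (hi0.trans hi.symm)
    rwa [this] at h1

/-- If `R` is a finite ring with `p` elements and `M` has set-rank at most `r`,
then `[n]` can be labeled by predicates `W d ℓ`, `V d ℓ` (for nonzero `d ∈ R`
and `ℓ ⊆ [r]`) so that `M i j = d` iff some `ℓ` has `W d ℓ i` and `V d ℓ j`. -/
theorem setRank_labeling {n p r : ℕ} {R : Type*} [Fintype R] [DecidableEq R]
    [Ring R] (hp : Fintype.card R = p) (M : Matrix (Fin n) (Fin n) R)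
    (hr : srank M ≤ r) :
    ∃ (W V : R → Finset (Fin r) → Set (Fin n)),
      ∀ d : R, d ≠ 0 → ∀ i j,
        M i j = d ↔ ∃ ℓ : Finset (Fin r), i ∈ W d ℓ ∧ j ∈ V d ℓ := by
  classical
  have key : ∀ d : R, d ≠ 0 →
      ∃ (W V : Finset (Fin r) → Set (Fin n)),
        ∀ i j, M i j = d ↔ ∃ ℓ, i ∈ W ℓ ∧ j ∈ V ℓ := by
    intro d hd
    have hrank : (matSlice2 M d).rank ≤ r := by
      refine le_trans ?_ hr
      unfold srank
      exact Finset.single_le_sum (f := fun d => (matSlice2 M d).rank)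
        (fun _ _ => Nat.zero_le _)
        (Finset.mem_erase.mpr ⟨hd, Finset.mem_univ d⟩)
    obtain ⟨W, V, h⟩ := slice_label (matSlice2 M d) hrank
    refine ⟨W, V, fun i j => ?_⟩
    rw [← h i j]
    constructor
    · intro hm; simp [matSlice2, hm]
    · intro hs
      by_contra hm
      simp [matSlice2, hm] at hs
  choose W V hWV using fun d (hd : d ≠ 0) => key d hd
  refine ⟨fun d => if h : d ≠ 0 then W d h else fun _ => ∅,
          fun d => if h : d ≠ 0 then V d h else fun _ => ∅, ?_⟩
  intro d hd i j
  simp only [dif_pos hd]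
  exact hWV d hd i j
end
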